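/- The invariant factors f₁ | f₂ | ⋯ | f_v of the Laplacian of an N-colored Adinkra on v vertices satisfy f_i · f_{v-i+1} = N² - N for all i. -/

import Mathlib

/-!
Since every bicoloured 2-factor consists of 4-cycles with an odd number of negative edges, the
two-step walks between distinct vertices cancel in pairs, so `A_σ² = N·I` and
`L · (N·I + A_σ) = (N² - N)·I`. Flipping signs along a bipartition, `P = diag(±1)`, conjugates
`L = N·I - A_σ` into `N·I + A_σ`. From `U L W = diag f` one gets `W⁻¹ (N·I + A_σ) U⁻¹ = diag g`
with `f i * g i = N² - N`, and `diag g` is unimodularly equivalent to `diag f`. Reversed, `g` is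
again a divisibility chain, so uniqueness of the Smith normal form gives `f (rev i) = g i`.

Uniqueness is proved by counting solutions of `D x = 0` over `ZMod n`, an invariant of unimodular
equivalence: for a chain `f` and `n = f i`, every factor from index `i` on kills all of `ZMod n`,
and the count forces the same of the other chain.
-/

open Matrix

/-- `nbr c u` is the neighbour of `u` along its edge of colour `c`, and `σ u w` is the sign of
the edge `uw`. -/
structure IsAdinkra {V : Type} [Fintype V] [DecidableEq V] (N : ℕ)
    (nbr : Fin N → V → V) (σ : V → V → ℤ) : Prop where
  invol : ∀ c u, nbr c (nbr c u) = u
  ne : ∀ c u, nbr c u ≠ u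
  distinct : ∀ c c' u, c ≠ c' → nbr c u ≠ nbr c' u
  symm : ∀ u w, σ u w = σ w u
  sign_unit : ∀ u w, σ u w = 1 ∨ σ u w = -1
  bipartite : ∃ p : V → ZMod 2, ∀ c u, p (nbr c u) ≠ p u
  connected : (SimpleGraph.fromRel fun u w => ∃ c, nbr c u = w).Connected
  fourCycle : ∀ c c', c ≠ c' → ∀ u, nbr c (nbr c' (nbr c (nbr c' u))) = u
  oddSign : ∀ c c', c ≠ c' → ∀ u,
    σ u (nbr c' u) * σ (nbr c' u) (nbr c (nbr c' u)) *
      σ (nbr c (nbr c' u)) (nbr c' (nbr c (nbr c' u))) *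
      σ (nbr c' (nbr c (nbr c' u))) u = -1

def adinkraAdj {V : Type} [Fintype V] [DecidableEq V] {N : ℕ}
    (nbr : Fin N → V → V) (σ : V → V → ℤ) : Matrix V V ℤ :=
  Matrix.of fun u w => if ∃ c, nbr c u = w then σ u w else 0

def adinkraLap {V : Type} [Fintype V] [DecidableEq V] {N : ℕ}
    (nbr : Fin N → V → V) (σ : V → V → ℤ) : Matrix V V ℤ :=
  (N : ℤ) • (1 : Matrix V V ℤ) - adinkraAdj nbr σ

namespace Matrix

section CommRing

variable {ι R : Type*} [Fintype ι] [DecidableEq ι] [CommRing R]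

theorem card_ker_mul_mul_of_isUnit {P Q : Matrix ι ι R} (hP : IsUnit P) (hQ : IsUnit Q)
    (A : Matrix ι ι R) :
    Nat.card {x // (P * A * Q) *ᵥ x = 0} = Nat.card {x // A *ᵥ x = 0} := by
  have hQ_bij : Function.Bijective Q.mulVec :=
    ⟨mulVec_injective_of_isUnit hQ, mulVec_surjective_iff_isUnit.mpr hQ⟩
  refine Nat.card_congr (Equiv.subtypeEquiv (Equiv.ofBijective _ hQ_bij) fun x => ?_)
  rw [Equiv.ofBijective_apply, ← mulVec_mulVec, ← mulVec_mulVec]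
  conv_lhs => rw [← mulVec_zero P]
  exact (mulVec_injective_of_isUnit hP).eq_iff

theorem card_ker_diagonal (d : ι → R) :
    Nat.card {x // diagonal d *ᵥ x = 0} = ∏ i, Nat.card {y // d i * y = 0} := by
  rw [← Nat.card_pi]
  refine Nat.card_congr ((Equiv.subtypeEquivRight fun x => ?_).trans Equiv.subtypePiEquivPi)
  simp only [funext_iff, mulVec_diagonal, Pi.zero_apply]

theorem diagonal_mul_smul_one_sub_mul_diagonal {ε : ι → R} (hε : ∀ i, ε i * ε i = 1)
    {A : Matrix ι ι R} (hA : ∀ i j, ε i * A i j * ε j = -A i j) (a : R) :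
    diagonal ε * (a • 1 - A) * diagonal ε = a • 1 + A := by
  ext i j
  rw [mul_diagonal, diagonal_mul, sub_apply, add_apply, mul_sub, sub_mul, hA]
  rcases eq_or_ne i j with rfl | hij
  · simp only [Matrix.smul_apply, one_apply_eq]
    linear_combination (a * 1) * hε i
  · simp [one_apply_ne hij]

end CommRing

section Semiring

variable {ι R : Type*} [Fintype ι] [DecidableEq ι] [Semiring R]

theorem diagonal_comp_perm (e : Equiv.Perm ι) (d : ι → R) :
    diagonal (d ∘ e) = e.permMatrix R * diagonal d * (e⁻¹).permMatrix R := by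
  rw [PEquiv.toMatrix_toPEquiv_mul, PEquiv.mul_toMatrix_toPEquiv, submatrix_submatrix]
  exact (submatrix_diagonal_equiv d e).symm

theorem isUnit_permMatrix (e : Equiv.Perm ι) : IsUnit (e.permMatrix R) :=
  ⟨⟨e.permMatrix R, (e⁻¹).permMatrix R, by rw [← permMatrix_mul, inv_mul_cancel, permMatrix_one],
    by rw [← permMatrix_mul, mul_inv_cancel, permMatrix_one]⟩, rfl⟩

theorem exists_diagonal_of_diagonal_mul_eq_smul_one [NoZeroDivisors R] {f : ι → R}
    {M : Matrix ι ι R} {m : R} (hf : ∀ i, f i ≠ 0) (h : diagonal f * M = m • 1) :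
    ∃ g : ι → R, M = diagonal g ∧ ∀ i, f i * g i = m := by
  have hM : ∀ i j, f i * M i j = if i = j then m else 0 := fun i j => by
    simpa [one_apply] using congrFun (congrFun h i) j
  refine ⟨fun i => M i i, ext fun i j => ?_, fun i => by simpa using hM i i⟩
  rcases eq_or_ne i j with rfl | hij
  · simp
  · simpa [hij, hf i] using hM i j

end Semiring

end Matrix

noncomputable def annCard (n : ℕ) (a : ℤ) : ℕ := Nat.card {y : ZMod n // (a : ZMod n) * y = 0}

section annCard

variable {n : ℕ} [NeZero n]

theorem annCard_pos (a : ℤ) : 0 < annCard n a :=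
  have : Nonempty {y : ZMod n // (a : ZMod n) * y = 0} := ⟨⟨0, mul_zero _⟩⟩
  Nat.card_pos

theorem annCard_le (a : ℤ) : annCard n a ≤ n := by
  rw [annCard, Nat.card_eq_fintype_card]
  exact (Fintype.card_subtype_le _).trans_eq (ZMod.card n)

theorem annCard_eq_self_iff {a : ℤ} : annCard n a = n ↔ (n : ℤ) ∣ a := by
  rw [← ZMod.intCast_zmod_eq_zero_iff_dvd, annCard, Nat.card_eq_fintype_card]
  constructor
  · intro h
    by_contra ha
    have := Fintype.card_subtype_lt (p := fun y : ZMod n => (a : ZMod n) * y = 0) (x := 1)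
      (by rwa [mul_one])
    rw [h, ZMod.card] at this
    exact lt_irrefl n this
  · intro ha
    simp [ha, ZMod.card]

end annCard

theorem prod_annCard_eq_of_mul_diagonal_mul {ι : Type*} [Fintype ι] [DecidableEq ι]
    {P Q : Matrix ι ι ℤ} (hP : IsUnit P) (hQ : IsUnit Q) {f g : ι → ℤ}
    (h : P * diagonal f * Q = diagonal g) (n : ℕ) :
    ∏ i, annCard n (f i) = ∏ i, annCard n (g i) := by
  let φ := (Int.castRingHom (ZMod n)).mapMatrix (m := ι)
  have := card_ker_mul_mul_of_isUnit (hP.map φ) (hQ.map φ) (φ (diagonal f))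
  rw [← map_mul, ← map_mul, h] at this
  simpa [φ, annCard, card_ker_diagonal] using this.symm

section DivisibilityChain

variable {ι : Type*} [Fintype ι] [LinearOrder ι] {f g : ι → ℤ}

theorem dvd_of_prod_annCard_eq (hf : ∀ i, 0 < f i) (hf_dvd : ∀ i j, i ≤ j → f i ∣ f j)
    (hcard : ∀ n, ∏ i, annCard n (f i) = ∏ i, annCard n (g i)) {i : ι}
    (hlt : ∀ j < i, f j = g j) : f i ∣ g i := by
  classical
  set n := (f i).natAbs
  have : NeZero n := ⟨Int.natAbs_ne_zero.mpr (hf i).ne'⟩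
  have hn : ∀ a : ℤ, annCard n a = n ↔ f i ∣ a := fun a => by
    rw [annCard_eq_self_iff, Int.natAbs_dvd]
  have hsplit := hcard n
  rw [← Finset.prod_filter_mul_prod_filter_not Finset.univ (· < i),
    ← Finset.prod_filter_mul_prod_filter_not Finset.univ (· < i) (f := fun j => annCard n (g j)),
    Finset.prod_congr rfl (fun j hj => by rw [hlt j (Finset.mem_filter.mp hj).2])] at hsplit
  have htail := mul_left_cancel₀ (Finset.prod_pos fun j _ => annCard_pos _).ne' hsplit
  rw [Finset.prod_congr rfl fun j hj =>
    (hn _).mpr (hf_dvd i j (not_lt.mp (Finset.mem_filter.mp hj).2))] at htail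
  refine (hn _).mp ((annCard_le _).antisymm (not_lt.mp fun hlt' => ?_))
  exact (Finset.prod_lt_prod (fun j _ => annCard_pos _) (fun j _ => annCard_le _)
    ⟨i, by simp, hlt'⟩).ne htail.symm

theorem eq_of_prod_annCard_eq (hf : ∀ i, 0 < f i) (hg : ∀ i, 0 < g i)
    (hf_dvd : ∀ i j, i ≤ j → f i ∣ f j) (hg_dvd : ∀ i j, i ≤ j → g i ∣ g j)
    (hcard : ∀ n, ∏ i, annCard n (f i) = ∏ i, annCard n (g i)) : f = g := by
  funext i
  induction i using WellFoundedLT.induction with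
  | ind i ih =>
    exact Int.dvd_antisymm (hf i).le (hg i).le (dvd_of_prod_annCard_eq hf hf_dvd hcard ih)
      (dvd_of_prod_annCard_eq hg hg_dvd (fun n => (hcard n).symm) fun j hj => (ih j hj).symm)

end DivisibilityChain

structure IsSmithNormalForm {ι : Type*} [Fintype ι] [DecidableEq ι] [LinearOrder ι]
    (L : Matrix ι ι ℤ) (f : ι → ℤ) : Prop where
  pos : ∀ i, 0 < f i
  dvd : ∀ i j, i ≤ j → f i ∣ f j
  exists_eq : ∃ U W : Matrix ι ι ℤ, IsUnit U ∧ IsUnit W ∧ U * L * W = diagonal f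

namespace IsSmithNormalForm

theorem unique {ι : Type*} [Fintype ι] [DecidableEq ι] [LinearOrder ι] {L : Matrix ι ι ℤ}
    {f g : ι → ℤ} (hf : IsSmithNormalForm L f) (hg : IsSmithNormalForm L g) : f = g := by
  obtain ⟨U, W, ⟨U, rfl⟩, ⟨W, rfl⟩, hUW⟩ := hf.exists_eq
  obtain ⟨U', W', hU', hW', hUW'⟩ := hg.exists_eq
  have hequiv : (U' * (↑U⁻¹ : Matrix ι ι ℤ)) * diagonal f * ((↑W⁻¹ : Matrix ι ι ℤ) * W') =
      diagonal g := by
    simp only [← hUW', ← hUW, mul_assoc, Units.inv_mul_cancel_left, Units.mul_inv_cancel_left]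
  exact eq_of_prod_annCard_eq hf.pos hg.pos hf.dvd hg.dvd
    (prod_annCard_eq_of_mul_diagonal_mul (hU'.mul U⁻¹.isUnit) (W⁻¹.isUnit.mul hW') hequiv)

theorem mul_rev_eq {v : ℕ} {L L' : Matrix (Fin v) (Fin v) ℤ} {f : Fin v → ℤ} {m : ℤ}
    (hf : IsSmithNormalForm L f) (hm : 0 < m) (hLL' : L * L' = m • 1)
    {P Q : Matrix (Fin v) (Fin v) ℤ} (hP : IsUnit P) (hQ : IsUnit Q) (hPLQ : P * L * Q = L')
    (i : Fin v) : f i * f i.rev = m := by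
  obtain ⟨U, W, ⟨U, rfl⟩, ⟨W, rfl⟩, hUW⟩ := hf.exists_eq
  have hM : diagonal f * ((↑W⁻¹ : Matrix (Fin v) (Fin v) ℤ) * L' * (↑U⁻¹ : Matrix _ _ ℤ)) =
      m • 1 := by
    simp only [← hUW, mul_assoc, Units.mul_inv_cancel_left]
    rw [← mul_assoc L, hLL', smul_mul_assoc, one_mul, mul_smul_comm, Units.mul_inv]
  obtain ⟨g, hMg, hfg⟩ := exists_diagonal_of_diagonal_mul_eq_smul_one (fun i => (hf.pos i).ne') hM
  have hg : IsSmithNormalForm L (g ∘ Fin.revPerm) := by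
    refine ⟨fun i => pos_of_mul_pos_right ((hfg _).symm ▸ hm) (hf.pos _).le, fun i j hij => ?_, ?_⟩
    · obtain ⟨t, ht⟩ := hf.dvd _ _ (Fin.rev_le_rev.mpr hij)
      refine ⟨t, mul_left_cancel₀ (hf.pos (Fin.rev j)).ne' ?_⟩
      simp only [Function.comp_apply, Fin.revPerm_apply]
      rw [hfg, ← hfg i.rev, ht]
      ring
    · refine ⟨Fin.revPerm.permMatrix ℤ * (↑W⁻¹ : Matrix (Fin v) (Fin v) ℤ) * P,
        Q * (↑U⁻¹ : Matrix (Fin v) (Fin v) ℤ) * (Fin.revPerm⁻¹).permMatrix ℤ,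
        ((isUnit_permMatrix _).mul W⁻¹.isUnit).mul hP,
        (hQ.mul U⁻¹.isUnit).mul (isUnit_permMatrix _), ?_⟩
      rw [diagonal_comp_perm, ← hMg, ← hPLQ]
      simp only [mul_assoc]
  rw [congrFun (hf.unique hg) i.rev, Function.comp_apply, Fin.revPerm_apply, Fin.rev_rev, hfg]

end IsSmithNormalForm

theorem neg_one_pow_val_mul_neg_one_pow_val_of_ne {a b : ZMod 2} (h : a ≠ b) :
    (-1 : ℤ) ^ a.val * (-1) ^ b.val = -1 := by
  revert a b
  decide

namespace IsAdinkra

variable {V : Type} [Fintype V] [DecidableEq V] {N : ℕ} {nbr : Fin N → V → V} {σ : V → V → ℤ}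

theorem nbr_injective (hA : IsAdinkra N nbr σ) (u : V) : Function.Injective (nbr · u) :=
  fun _ _ h => by_contra fun hne => hA.distinct _ _ u hne h

theorem nbr_comm (hA : IsAdinkra N nbr σ) {c c' : Fin N} (h : c ≠ c') (u : V) :
    nbr c (nbr c' u) = nbr c' (nbr c u) := by
  simpa only [Function.comp_apply, hA.invol] using
    congrArg (nbr c' ∘ nbr c) (hA.fourCycle c c' h u)

theorem sign_mul_self (hA : IsAdinkra N nbr σ) (u w : V) : σ u w * σ u w = 1 := by
  rcases hA.sign_unit u w with h | h <;> simp [h]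

theorem sum_adj_mul (hA : IsAdinkra N nbr σ) (u : V) (F : V → ℤ) :
    ∑ x, adinkraAdj nbr σ u x * F x = ∑ c, σ u (nbr c u) * F (nbr c u) := by
  refine (Fintype.sum_of_injective (nbr · u) (hA.nbr_injective u) _ _ (fun x hx => ?_)
    (fun c => ?_)).symm
  · simp_all [adinkraAdj]
  · rw [adinkraAdj, of_apply, if_pos ⟨c, rfl⟩]

def twoStepSign (nbr : Fin N → V → V) (σ : V → V → ℤ) (u : V) (c c' : Fin N) : ℤ :=
  σ u (nbr c u) * σ (nbr c u) (nbr c' (nbr c u))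

theorem adj_mul_adj_apply (hA : IsAdinkra N nbr σ) (u w : V) :
    (adinkraAdj nbr σ * adinkraAdj nbr σ) u w =
      ∑ c, ∑ c', if nbr c' (nbr c u) = w then twoStepSign nbr σ u c c' else 0 := by
  have hcol : ∀ x, adinkraAdj nbr σ x w = ∑ c', if nbr c' x = w then σ x (nbr c' x) else 0 :=
    fun x => by simpa using hA.sum_adj_mul x (fun y => if y = w then 1 else 0)
  rw [mul_apply, hA.sum_adj_mul]
  simp only [hcol, Finset.mul_sum, mul_ite, mul_zero, twoStepSign]

theorem twoStepSign_self (hA : IsAdinkra N nbr σ) (u : V) (c : Fin N) :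
    twoStepSign nbr σ u c c = 1 := by
  rw [twoStepSign, hA.invol, hA.symm (nbr c u), hA.sign_mul_self]

theorem twoStepSign_add_swap (hA : IsAdinkra N nbr σ) {c c' : Fin N} (h : c ≠ c') (u : V) :
    twoStepSign nbr σ u c c' + twoStepSign nbr σ u c' c = 0 := by
  have hz : nbr c' (nbr c u) = nbr c (nbr c' u) := (hA.nbr_comm h u).symm
  have hx : nbr c' (nbr c (nbr c' u)) = nbr c u := by rw [← hz, hA.invol]
  have hodd := hA.oddSign c c' h u
  rw [hx, hA.symm _ (nbr c u), hA.symm (nbr c u) u] at hodd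
  have hsq : twoStepSign nbr σ u c c' * twoStepSign nbr σ u c c' = 1 := by
    rw [twoStepSign, mul_mul_mul_comm, hA.sign_mul_self, hA.sign_mul_self, one_mul]
  unfold twoStepSign at hsq ⊢
  rw [hz] at hsq ⊢
  linear_combination (σ u (nbr c u) * σ (nbr c u) (nbr c (nbr c' u))) * hodd -
    (σ u (nbr c' u) * σ (nbr c' u) (nbr c (nbr c' u))) * hsq

theorem adj_mul_self (hA : IsAdinkra N nbr σ) :
    adinkraAdj nbr σ * adinkraAdj nbr σ = (N : ℤ) • 1 := by
  ext u w
  rw [hA.adj_mul_adj_apply, Matrix.smul_apply, one_apply, smul_ite, smul_zero, smul_eq_mul,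
    mul_one]
  set T : Fin N → Fin N → ℤ := fun c c' =>
    if nbr c' (nbr c u) = w then twoStepSign nbr σ u c c' else 0
  have hpair : ∀ c c', T c c' + T c' c = if c = c' ∧ u = w then 2 else 0 := by
    intro c c'
    rcases eq_or_ne c c' with rfl | hcc
    · by_cases huw : u = w <;> simp [T, huw, hA.invol, hA.twoStepSign_self]
    · simp only [T, hcc, false_and, if_false, hA.nbr_comm hcc u]
      split_ifs
      · exact hA.twoStepSign_add_swap hcc u
      · rfl
  have hsum : 2 * ∑ c, ∑ c', T c c' = if u = w then 2 * (N : ℤ) else 0 := by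
    calc 2 * ∑ c, ∑ c', T c c' = ∑ c, ∑ c', (T c c' + T c' c) := by
          rw [two_mul]
          simp only [Finset.sum_add_distrib]
          congr 1
          exact Finset.sum_comm
      _ = if u = w then 2 * (N : ℤ) else 0 := by
          simp only [hpair]
          by_cases huw : u = w <;> simp [huw, mul_comm]
  split_ifs at hsum ⊢ <;> linarith

theorem lap_mul_smul_one_add_adj (hA : IsAdinkra N nbr σ) :
    adinkraLap nbr σ * ((N : ℤ) • 1 + adinkraAdj nbr σ) = ((N : ℤ) ^ 2 - N) • 1 := by
  rw [adinkraLap, sub_mul, mul_add, mul_add, hA.adj_mul_self, smul_one_mul, smul_one_mul,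
    mul_smul_one]
  module

theorem exists_isUnit_mul_lap_mul_eq (hA : IsAdinkra N nbr σ) :
    ∃ P : Matrix V V ℤ, IsUnit P ∧ P * adinkraLap nbr σ * P = (N : ℤ) • 1 + adinkraAdj nbr σ := by
  obtain ⟨p, hp⟩ := hA.bipartite
  have hε : ∀ u, (-1 : ℤ) ^ (p u).val * (-1) ^ (p u).val = 1 := fun u => by
    rw [← mul_pow, neg_one_mul, neg_neg, one_pow]
  refine ⟨diagonal fun u => (-1) ^ (p u).val,
    isUnit_diagonal.mpr (Pi.isUnit_iff.mpr fun u => IsUnit.of_mul_eq_one _ (hε u)),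
    diagonal_mul_smul_one_sub_mul_diagonal hε (fun u w => ?_) _⟩
  by_cases hadj : ∃ c, nbr c u = w
  · obtain ⟨c, rfl⟩ := hadj
    linear_combination adinkraAdj nbr σ u (nbr c u) *
      neg_one_pow_val_mul_neg_one_pow_val_of_ne (hp c u).symm
  · simp [adinkraAdj, hadj]

end IsAdinkra

/-- The invariant factors `f₁ ∣ f₂ ∣ ⋯ ∣ f_v` of the Laplacian of an `N`-colored
Adinkra on `v` vertices satisfy `f_i · f_{v-i+1} = N² - N` for all `i`. Here the
invariant factors are presented by a Smith normal form `U · L · W = diag f` with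
`U, W` unimodular, `f` positive and forming a divisibility chain. -/
theorem adinkra_invariant_factors_reciprocity {v : ℕ}
    {N : ℕ} (hN : 2 ≤ N) (nbr : Fin N → Fin v → Fin v) (σ : Fin v → Fin v → ℤ)
    (hA : IsAdinkra N nbr σ)
    (U W : Matrix (Fin v) (Fin v) ℤ) (hU : IsUnit U.det) (hW : IsUnit W.det)
    (f : Fin v → ℤ) (hpos : ∀ i, 0 < f i)
    (hchain : ∀ i j : Fin v, i ≤ j → f i ∣ f j)
    (hSNF : U * adinkraLap nbr σ * W = Matrix.diagonal f) :
    ∀ i : Fin v, f i * f i.rev = (N : ℤ) ^ 2 - N := by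
  have hm : 0 < (N : ℤ) ^ 2 - N := by
    have : (2 : ℤ) ≤ N := by exact_mod_cast hN
    nlinarith
  have hsnf : IsSmithNormalForm (adinkraLap nbr σ) f :=
    ⟨hpos, hchain, U, W, (isUnit_iff_isUnit_det U).mpr hU, (isUnit_iff_isUnit_det W).mpr hW, hSNF⟩
  obtain ⟨P, hP, hPLP⟩ := hA.exists_isUnit_mul_lap_mul_eq
  exact hsnf.mul_rev_eq hm hA.lap_mul_smul_one_add_adj hP hP hPLP
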